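/- arXiv:2402.01365 — 4 statements merged into one kernel-verified Lean document; each statement's English description precedes it below -/
import Mathlib

section
/- Let R be a complete non-archimedean ring over Q_p with ring of integral elements R°. Let f_1,…,f_r, g ∈ R°⟨X_1,…,X_d⟩ be power series with constant terms a_{0,i} = f_i(0) and b_0 = g(0). Suppose b_0 ∈ R^× and |a_{0,i}(x)| ≤ |b_0(x)| for all points x. Then there exists ε > 0 such that for all x and all points y of the closed ball of radius ε, one has |f_i(y)| ≤ |g(y)| and g(y) ≠ 0. -/
/-!
STATEMENT 0 (Lemma `l:open-nbhd-of-origin-contains-ball`):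
Let R be a complete non-archimedean ring over Q_p (e.g. the ring of functions on an affinoid
base S) with ring of integral elements R°.  Let f₁,…,f_r, g ∈ R°⟨X₁,…,X_d⟩ with constant terms
a_{0,i} = f_i(0), b₀ = g(0).  If b₀ ∈ R^× and |a_{0,i}(x)| ≤ |b₀(x)| for all points x, then
there is ε > 0 such that for all points x and all y in the closed ball of radius ε one has
|f_i(y)| ≤ |g(y)| and g(y) ≠ 0.

Formalization: `K` is a complete non-archimedean normed field; points `x` of the base range
over a type ι, and an element of R = O(S) is a function ι → K; a restricted power series in
R°⟨X₁,…,X_d⟩ is given by its coefficient family c : (Fin d →₀ ℕ) → (ι → K), with all values of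
norm ≤ 1 (integrality) and tending to 0 (restrictedness); evaluation at a point x and at
y ∈ K^d is the sum `rpsEval`.  The invertibility b₀ ∈ R^× is expressed by a uniform lower
bound δ ≤ ‖b₀(x)‖ (which characterizes units of an affinoid algebra in sup-norm terms),
together with pointwise nonvanishing.
-/

open Filter

/-- Evaluation of a restricted power series (given by its coefficients) at a point of the
polydisc. -/
noncomputable def rpsEval {K : Type*} [NormedField K] {d : ℕ}
    (c : (Fin d →₀ ℕ) → K) (y : Fin d → K) : K :=
  ∑' n : (Fin d →₀ ℕ), c n * ∏ j : Fin d, y j ^ n j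

/-!
Evaluating at a point `y` of the ball of radius `ε ≤ 1`, every non-constant term
`c n * y^n` of a series with integral coefficients has norm at most `ε`, so by the
ultrametric inequality the series differs from its constant term by at most `ε`.
Once `ε` is below the uniform lower bound `δ` of `‖b₀‖`, the value of `g` therefore has the
same norm as `b₀` (hence is nonzero), while the value of `f_i` has norm at most
`max ‖a_{0,i}‖ ε ≤ ‖b₀‖`.
-/

namespace IsUltrametricDist

variable {E : Type*} [SeminormedAddGroup E] [IsUltrametricDist E]

lemma norm_eq_of_norm_sub_lt_right {a b : E} (h : ‖a - b‖ < ‖b‖) : ‖a‖ = ‖b‖ := by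
  simpa [max_eq_right h.le] using norm_sub_eq_max_of_norm_sub_ne_norm_sub a b 0 (by simpa using h.ne)

lemma norm_le_of_norm_sub_le {a b : E} {C : ℝ} (hb : ‖b‖ ≤ C) (hab : ‖a - b‖ ≤ C) : ‖a‖ ≤ C := by
  simpa using (norm_add_le_max (a - b) b).trans (max_le hab hb)

end IsUltrametricDist

section Monomial

variable {K : Type*} [NormedField K] {σ : Type*} [Fintype σ] {y : σ → K}

lemma norm_prod_pow_le_one (hy : ∀ j, ‖y j‖ ≤ 1) (n : σ → ℕ) : ‖∏ j, y j ^ n j‖ ≤ 1 := by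
  rw [norm_prod]
  exact Finset.prod_le_one (fun _ _ => norm_nonneg _) fun j _ => by
    rw [norm_pow]; exact pow_le_one₀ (norm_nonneg _) (hy j)

lemma norm_prod_pow_le_of_ne_zero {ε : ℝ} (hε : ε ≤ 1) (hy : ∀ j, ‖y j‖ ≤ ε)
    {n : σ →₀ ℕ} (hn : n ≠ 0) : ‖∏ j, y j ^ n j‖ ≤ ε := by
  classical
  obtain ⟨j, hj⟩ := Finsupp.ne_iff.mp hn
  have hy1 : ∀ k, ‖y k‖ ≤ 1 := fun k => (hy k).trans hε
  rw [← Finset.mul_prod_erase _ _ (Finset.mem_univ j), norm_mul, ← mul_one ε]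
  refine mul_le_mul ?_ ?_ (norm_nonneg _) ((norm_nonneg _).trans (hy j))
  · rw [norm_pow]
    exact (pow_le_of_le_one (norm_nonneg _) (hy1 j) hj).trans (hy j)
  · rw [norm_prod]
    exact Finset.prod_le_one (fun _ _ => norm_nonneg _) fun k _ => by
      rw [norm_pow]; exact pow_le_one₀ (norm_nonneg _) (hy1 k)

end Monomial

section RestrictedPowerSeries

variable {K : Type*} [NormedField K] [IsUltrametricDist K] [CompleteSpace K] {d : ℕ}
  {c : (Fin d →₀ ℕ) → K} {y : Fin d → K}

lemma summable_coeff_mul_prod_pow (hc : Tendsto c cofinite (nhds 0)) (hy : ∀ j, ‖y j‖ ≤ 1) :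
    Summable fun n : Fin d →₀ ℕ => c n * ∏ j, y j ^ n j := by
  refine NonarchimedeanAddGroup.summable_of_tendsto_cofinite_zero
    (squeeze_zero_norm (fun n => ?_) (by simpa using hc.norm))
  rw [norm_mul]
  exact mul_le_of_le_one_right (norm_nonneg _) (norm_prod_pow_le_one hy n)

lemma norm_rpsEval_sub_coeff_zero_le (hc_int : ∀ n, ‖c n‖ ≤ 1)
    (hc : Tendsto c cofinite (nhds 0)) {ε : ℝ} (hε0 : 0 ≤ ε) (hε1 : ε ≤ 1)
    (hy : ∀ j, ‖y j‖ ≤ ε) : ‖rpsEval c y - c 0‖ ≤ ε := by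
  classical
  have hsum := summable_coeff_mul_prod_pow hc fun j => (hy j).trans hε1
  rw [rpsEval, hsum.tsum_eq_add_tsum_ite 0]
  simp only [Finsupp.coe_zero, Pi.zero_apply, pow_zero, Finset.prod_const_one, mul_one,
    add_sub_cancel_left]
  refine IsUltrametricDist.norm_tsum_le_of_forall_le_of_nonneg hε0 fun n => ?_
  split_ifs with hn
  · simpa using hε0
  · rw [norm_mul]
    exact (mul_le_of_le_one_left (norm_nonneg _) (hc_int n)).trans
      (norm_prod_pow_le_of_ne_zero hε1 hy hn)

end RestrictedPowerSeries

theorem rational_subset_contains_small_ball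
    {K : Type*} [NontriviallyNormedField K] [IsUltrametricDist K] [CompleteSpace K]
    {ι : Type*} {d r : ℕ}
    (f : Fin r → (Fin d →₀ ℕ) → ι → K) (g : (Fin d →₀ ℕ) → ι → K)
    (hf_int : ∀ i n x, ‖f i n x‖ ≤ 1) (hg_int : ∀ n x, ‖g n x‖ ≤ 1)
    (hf_restricted : ∀ i x, Tendsto (fun n => f i n x) cofinite (nhds 0))
    (hg_restricted : ∀ x, Tendsto (fun n => g n x) cofinite (nhds 0))
    (hb0_unit : (∀ x, g 0 x ≠ 0) ∧ ∃ δ : ℝ, 0 < δ ∧ ∀ x, δ ≤ ‖g 0 x‖)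
    (ha0 : ∀ i x, ‖f i 0 x‖ ≤ ‖g 0 x‖) :
    ∃ ε : ℝ, 0 < ε ∧ ∀ (x : ι) (y : Fin d → K), (∀ j, ‖y j‖ ≤ ε) →
      (∀ i, ‖rpsEval (fun n => f i n x) y‖ ≤ ‖rpsEval (fun n => g n x) y‖) ∧
        rpsEval (fun n => g n x) y ≠ 0 := by
  obtain ⟨-, δ, hδ, hδ_le⟩ := hb0_unit
  set ε := min (δ / 2) 1
  have hε0 : 0 < ε := by positivity
  have hεδ : ε < δ := (min_le_left _ _).trans_lt (half_lt_self hδ)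
  refine ⟨ε, hε0, fun x y hy => ?_⟩
  have hε_lt : ε < ‖g 0 x‖ := hεδ.trans_le (hδ_le x)
  have hg_tail := norm_rpsEval_sub_coeff_zero_le (hg_int · x) (hg_restricted x) hε0.le
    (min_le_right _ _) hy
  have hg_norm : ‖rpsEval (fun n => g n x) y‖ = ‖g 0 x‖ :=
    IsUltrametricDist.norm_eq_of_norm_sub_lt_right (hg_tail.trans_lt hε_lt)
  refine ⟨fun i => ?_, fun hg_zero => ?_⟩
  · have hf_tail := norm_rpsEval_sub_coeff_zero_le (hf_int i · x) (hf_restricted i x) hε0.le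
      (min_le_right _ _) hy
    rw [hg_norm]
    exact IsUltrametricDist.norm_le_of_norm_sub_le (ha0 i x) (hf_tail.trans hε_lt.le)
  · rw [hg_zero, norm_zero] at hg_norm
    linarith [hδ_le x]
end

section
/- Let 𝒢 → S be a commutative smooth relative group over a sousperfectoid or rigid base S over a p-adic field K, and let Ĝ ⊆ 𝒢 be its maximal topologically p-torsion open subgroup with logarithm log : Ĝ → Lie 𝒢 ⊗ G_a. Then ker(log) = 𝒢[p^∞] := colim_n 𝒢[p^n], the p-power torsion subgroup of 𝒢. -/
/-! A torsion element is killed by any homomorphism into the torsion-free group `V`; conversely,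
if `log x = 0` and `pⁿ • x ∈ U`, then `pⁿ • x` lies in `U ∩ ker log = 0`. -/

theorem AddMonoidHom.map_eq_zero_of_nsmul_eq_zero {G V : Type*} [AddGroup G] [AddMonoid V]
    [IsAddTorsionFree V] (f : G →+ V) {n : ℕ} (hn : n ≠ 0) {x : G} (hx : n • x = 0) :
    f x = 0 :=
  (AddSubmonoid.ker_saturated f (by simp [hx])).resolve_left hn

theorem kernel_of_logarithm_is_p_power_torsion
    {G V : Type*} [AddCommGroup G] [AddCommGroup V] [Module ℚ V]
    (p : ℕ) (hp : p.Prime)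
    (U : AddSubgroup G)
    (Ghat : AddSubgroup G) (hGhat : ∀ x : G, x ∈ Ghat ↔ ∃ n : ℕ, p ^ n • x ∈ U)
    (log : G →+ V)
    (hinjU : ∀ x ∈ U, log x = 0 → x = 0) :
    ∀ x ∈ Ghat, (log x = 0 ↔ ∃ n : ℕ, p ^ n • x = 0) := by
  have : IsAddTorsionFree V := .of_module_rat V
  intro x hx
  obtain ⟨n, hnU⟩ := (hGhat x).mp hx
  constructor
  · intro hlog
    exact ⟨n, hinjU _ hnU (by rw [map_nsmul, hlog, smul_zero])⟩
  · rintro ⟨m, hm⟩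
    exact log.map_eq_zero_of_nsmul_eq_zero (pow_ne_zero m hp.ne_zero) hm
end

section
/- For G = GL_n, identify 𝔠 = Spec K[b_1,…,b_n] and Lie 𝒥_b ≅ ⊕_{i=0}^{n-1} K·T^i where T satisfies T^n − b_1 T^{n-1} + … + (−1)^n b_n = 0. For b ∈ 𝔠(K) with Kostant section x = kos(b) ∈ 𝔤^reg, the derivative of the canonical isomorphism a_x : 𝒥_b ≅ I_x is the ring map da_x : ⊕ c_i T^i ↦ ⊕ c_i x^i, and hence the tautological section τ(b) ∈ Lie 𝒥_b, characterized by da_x(τ(b)) = x, equals T (the class of the variable T). -/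
/-!
Since `x` is regular, `K[T]/(χ_x) → K[x]` is injective: its kernel is generated by the minimal
polynomial, which is `χ_x`. The substance is that the centralizer of `x` is no larger than `K[x]`.
By the structure theory of finitely generated `K[T]`-modules, `Kⁿ` contains a vector `v` whose
annihilator is generated by the minimal polynomial; as that polynomial has degree `n`, the vectors
`p(x) v` with `deg p < n` already exhaust `Kⁿ`, so `v` is cyclic. A matrix `y` commuting with `x`
is then determined by `y v = p(x) v`, and so `y = p(x)`.
-/

open Polynomial

/-- The derivative `da_x : Lie 𝒥_b = K[T]/(χ_x) → Mₙ(K)`, `Σ cᵢTⁱ ↦ Σ cᵢxⁱ`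
(well defined by Cayley–Hamilton). -/
noncomputable def daX {K : Type*} [Field K] {n : ℕ} (x : Matrix (Fin n) (Fin n) K) :
    AdjoinRoot x.charpoly →ₐ[K] Matrix (Fin n) (Fin n) K :=
  Ideal.Quotient.liftₐ (Ideal.span {x.charpoly}) (Polynomial.aeval x) (by
    intro a ha
    obtain ⟨c, rfl⟩ := Ideal.mem_span_singleton.mp ha
    rw [map_mul, x.aeval_self_charpoly, zero_mul])

open Module

section Endomorphism

variable {K V : Type*} [Field K] [AddCommGroup V] [Module K V] [FiniteDimensional K V]

theorem Module.End.exists_minpoly_dvd_of_aeval_apply_eq_zero (f : Module.End K V) :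
    ∃ v : V, ∀ p : K[X], aeval f p v = 0 → minpoly K f ∣ p := by
  obtain ⟨v, hv⟩ := exists_ker_toSpanSingleton_eq_annihilator K[X] (AEval' f)
  obtain ⟨v, rfl⟩ := (AEval'.of f).surjective v
  refine ⟨v, fun p hp => Ideal.mem_span_singleton.mp ?_⟩
  rw [span_minpoly_eq_annihilator, ← hv, LinearMap.mem_ker, LinearMap.toSpanSingleton_apply,
    ← AEval.of_aeval_smul, Module.End.smul_def, hp, map_zero]

theorem Module.End.exists_cyclic_vector_of_natDegree_minpoly_eq_finrank {f : Module.End K V}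
    (hf : (minpoly K f).natDegree = finrank K V) :
    ∃ v : V, ∀ w : V, ∃ p : K[X], aeval f p v = w := by
  obtain ⟨v, hv⟩ := f.exists_minpoly_dvd_of_aeval_apply_eq_zero
  let evalAt : K[X]_(finrank K V) →ₗ[K] V :=
    LinearMap.applyₗ v ∘ₗ (aeval f).toLinearMap ∘ₗ Submodule.subtype _
  have hinj : Function.Injective evalAt := by
    refine (injective_iff_map_eq_zero _).mpr fun ⟨p, hp⟩ h0 => Subtype.ext ?_
    refine eq_zero_of_dvd_of_degree_lt (hv p h0) ?_
    rw [degree_eq_natDegree (minpoly.ne_zero (Algebra.IsIntegral.isIntegral f)), hf]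
    exact mem_degreeLT.mp hp
  have hdim : finrank K (K[X]_(finrank K V)) = finrank K V := by
    rw [(degreeLTEquiv K _).finrank_eq, finrank_fin_fun]
  refine ⟨v, fun w => ?_⟩
  obtain ⟨⟨p, _⟩, hp⟩ := (LinearMap.injective_iff_surjective_of_finrank_eq_finrank hdim).mp hinj w
  exact ⟨p, hp⟩

theorem Module.End.exists_aeval_eq_of_commute {f g : Module.End K V}
    (hf : (minpoly K f).natDegree = finrank K V) (hfg : Commute f g) :
    ∃ p : K[X], aeval f p = g := by
  obtain ⟨v, hv⟩ := exists_cyclic_vector_of_natDegree_minpoly_eq_finrank hf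
  obtain ⟨p, hp⟩ := hv (g v)
  refine ⟨p, LinearMap.ext fun w => ?_⟩
  obtain ⟨q, rfl⟩ := hv w
  have hgq : Commute g (aeval f q) :=
    Algebra.commute_of_mem_adjoin_singleton_of_commute (aeval_mem_adjoin_singleton K f) hfg.symm
  calc aeval f p (aeval f q v) = aeval f q (aeval f p v) := by
        rw [← Module.End.mul_apply, ← map_mul, mul_comm, map_mul, Module.End.mul_apply]
    _ = g (aeval f q v) := by rw [hp, ← Module.End.mul_apply, ← hgq.eq, Module.End.mul_apply]

end Endomorphism

theorem Matrix.exists_aeval_eq_of_commute {K ι : Type*} [Field K] [Fintype ι] [DecidableEq ι]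
    {x y : Matrix ι ι K} (hx : (minpoly K x).natDegree = Fintype.card ι) (hxy : Commute x y) :
    ∃ p : K[X], aeval x p = y := by
  obtain ⟨p, hp⟩ := Module.End.exists_aeval_eq_of_commute (f := toLinAlgEquiv' x)
    (by rwa [minpoly.algEquiv_eq, finrank_fintype_fun_eq_card]) (hxy.map toLinAlgEquiv')
  exact ⟨p, toLinAlgEquiv'.injective (by rw [← aeval_algHom_apply, hp])⟩

section daX

variable {K : Type*} [Field K] {n : ℕ}

theorem daX_mk (x : Matrix (Fin n) (Fin n) K) (p : K[X]) :
    daX x (AdjoinRoot.mk x.charpoly p) = aeval x p :=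
  rfl

theorem daX_root (x : Matrix (Fin n) (Fin n) K) : daX x (AdjoinRoot.root x.charpoly) = x := by
  rw [← AdjoinRoot.mk_X, daX_mk, aeval_X]

theorem daX_injective {x : Matrix (Fin n) (Fin n) K} (hreg : x.charpoly = minpoly K x) :
    Function.Injective (daX x) := by
  refine (injective_iff_map_eq_zero _).mpr fun a ha => ?_
  obtain ⟨p, rfl⟩ := AdjoinRoot.mk_surjective a
  rw [daX_mk] at ha
  rw [AdjoinRoot.mk_eq_zero, hreg]
  exact minpoly.dvd K x ha

theorem range_daX {x : Matrix (Fin n) (Fin n) K} (hreg : x.charpoly = minpoly K x) :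
    Set.range (daX x) = {y | x * y = y * x} := by
  ext y
  constructor
  · rintro ⟨a, rfl⟩
    obtain ⟨p, rfl⟩ := AdjoinRoot.mk_surjective a
    exact (Algebra.commute_of_mem_adjoin_self (aeval_mem_adjoin_singleton K x)).eq
  · intro hxy
    have hx : (minpoly K x).natDegree = Fintype.card (Fin n) := by
      rw [← hreg, Matrix.charpoly_natDegree_eq_dim]
    obtain ⟨p, hp⟩ := Matrix.exists_aeval_eq_of_commute hx hxy
    exact ⟨AdjoinRoot.mk x.charpoly p, hp⟩

end daX

theorem regular_centralizer_GLn_tautological_section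
    {K : Type*} [Field K] {n : ℕ}
    (x : Matrix (Fin n) (Fin n) K)
    (hreg : x.charpoly = minpoly K x) :
    Function.Injective (daX x) ∧
      Set.range (daX x) = {y : Matrix (Fin n) (Fin n) K | x * y = y * x} ∧
      daX x (AdjoinRoot.root x.charpoly) = x ∧
      ∃! τ : AdjoinRoot x.charpoly, daX x τ = x :=
  ⟨daX_injective hreg, range_daX hreg, daX_root x,
    ⟨_, daX_root x, fun _ hτ => daX_injective hreg (hτ.trans (daX_root x).symm)⟩⟩
end

section
/- Let (Λ_k)_{k≥0} be an inverse system of abelian groups such that for all k, l ≥ 0 there are short exact sequences 0 → Λ_l →^{·p^k} Λ_{k+l} → Λ_k → 0 compatible with transition maps (the transition map Λ_{k+l} → Λ_k is the quotient map). Then Λ := lim_k Λ_k satisfies Λ/p^k Λ ≅ Λ_k for all k, and Λ is p-torsion-free. -/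
/-!
Since all transition maps are surjective, an element of `Λ_k` lifts step by step to a compatible
family, so `Λ → Λ_k` is onto. Composing `μ` with the transition maps is multiplication by `pᵏ`;
for `k = l = 0` this gives `Λ_0 = 0`, and then for `l = 0` it gives `pᵏ Λ_k = 0`. A compatible
family `f` with `f k = 0` has each `f (k + m)` in the kernel of `Λ_{k+m} → Λ_k`, i.e.
`f (k + m) = μ k m (g m)`, and injectivity of `μ` makes `g` compatible with `f = pᵏ • g`.
Finally `μ 1 m (f m) = p • f (1 + m)`, so injectivity of `μ 1 m` turns `p • f = 0` into `f = 0`.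
-/

def IsCompatibleFamily {X : ℕ → Type*} (t : ∀ {m n : ℕ}, m ≤ n → X n → X m)
    (f : ∀ n, X n) : Prop :=
  ∀ m n (h : m ≤ n), t h (f n) = f m

section InverseSystem

variable {X : ℕ → Type*} (t : ∀ {m n : ℕ}, m ≤ n → X n → X m)

theorem isCompatibleFamily_of_succ
    (refl : ∀ m (x : X m), t le_rfl x = x)
    (trans : ∀ {a b c : ℕ} (h₁ : a ≤ b) (h₂ : b ≤ c) (x : X c), t h₁ (t h₂ x) = t (h₁.trans h₂) x)
    {f : ∀ n, X n} (hf : ∀ n, t (Nat.le_succ n) (f (n + 1)) = f n) :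
    IsCompatibleFamily t f := by
  intro m n h
  dsimp only
  induction n, h using Nat.le_induction with
  | base => exact refl m (f m)
  | succ n hmn ih => rw [← trans hmn (Nat.le_succ n), hf n, ih]

theorem exists_isCompatibleFamily_eq_of_surjective
    (refl : ∀ m (x : X m), t le_rfl x = x)
    (trans : ∀ {a b c : ℕ} (h₁ : a ≤ b) (h₂ : b ≤ c) (x : X c), t h₁ (t h₂ x) = t (h₁.trans h₂) x)
    (surj : ∀ {m n : ℕ} (h : m ≤ n), Function.Surjective (t h)) {k : ℕ} (y : X k) :
    ∃ f : ∀ n, X n, IsCompatibleFamily t f ∧ f k = y := by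
  choose lift hlift using fun n (x : X n) ↦ surj (Nat.le_succ n) x
  -- below `k` project `y`, above `k` lift it one step at a time
  let f : ∀ n, X n := fun n ↦ Nat.rec (t (Nat.zero_le k) y)
    (fun n fn ↦ if h : n + 1 ≤ k then t h y else lift n fn) n
  have hf_le : ∀ n (h : n ≤ k), f n = t h y := by
    rintro (_ | n) h
    · rfl
    · exact dif_pos h
  refine ⟨f, isCompatibleFamily_of_succ t refl trans fun n ↦ ?_, by rw [hf_le k le_rfl, refl]⟩
  by_cases h : n + 1 ≤ k
  · rw [hf_le (n + 1) h, hf_le n (Nat.le_of_succ_le h), trans]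
  · exact (congrArg (t _) (dif_neg h)).trans (hlift n (f n))

end InverseSystem

section PPowerSystem

variable {p : ℕ} {Λ : ℕ → Type*} [∀ m, AddCommGroup (Λ m)]
  (t : ∀ {m n : ℕ}, m ≤ n → (Λ n →+ Λ m)) (μ : ∀ k l : ℕ, Λ l →+ Λ (k + l))

theorem eq_zero_of_level_zero
    (refl : ∀ m (x : Λ m), t le_rfl x = x)
    (ker : ∀ k l (x : Λ (k + l)), t (Nat.le_add_right k l) x = 0 ↔ ∃ z, μ k l z = x)
    (comp₁ : ∀ k l (x : Λ (k + l)), μ k l (t (Nat.le_add_left l k) x) = p ^ k • x)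
    (x : Λ 0) : x = 0 := by
  have hx : μ 0 0 (t (Nat.le_add_left 0 0) x) = x := by simpa using comp₁ 0 0 x
  rw [← refl 0 x]
  exact (ker 0 0 x).mpr ⟨_, hx⟩

theorem pow_smul_eq_zero
    (refl : ∀ m (x : Λ m), t le_rfl x = x)
    (ker : ∀ k l (x : Λ (k + l)), t (Nat.le_add_right k l) x = 0 ↔ ∃ z, μ k l z = x)
    (comp₁ : ∀ k l (x : Λ (k + l)), μ k l (t (Nat.le_add_left l k) x) = p ^ k • x)
    {k : ℕ} (x : Λ k) : p ^ k • x = 0 := by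
  rw [← comp₁ k 0 x, eq_zero_of_level_zero t μ refl ker comp₁ (t _ x), map_zero]

theorem map_transition_comm
    (trans : ∀ {a b c : ℕ} (h₁ : a ≤ b) (h₂ : b ≤ c) (x : Λ c), t h₁ (t h₂ x) = t (h₁.trans h₂) x)
    (surj : ∀ {m n : ℕ} (h : m ≤ n), Function.Surjective (t h))
    (comp₁ : ∀ k l (x : Λ (k + l)), μ k l (t (Nat.le_add_left l k) x) = p ^ k • x)
    (k : ℕ) {m n : ℕ} (h : m ≤ n) (x : Λ n) :
    μ k m (t h x) = t (Nat.add_le_add_left h k) (μ k n x) := by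
  obtain ⟨x, rfl⟩ := surj (Nat.le_add_left n k) x
  rw [trans, ← trans (Nat.le_add_left m k) (Nat.add_le_add_left h k), comp₁, comp₁, map_nsmul]

theorem IsCompatibleFamily.eq_zero_iff_exists_pow_smul
    (refl : ∀ m (x : Λ m), t le_rfl x = x)
    (trans : ∀ {a b c : ℕ} (h₁ : a ≤ b) (h₂ : b ≤ c) (x : Λ c), t h₁ (t h₂ x) = t (h₁.trans h₂) x)
    (surj : ∀ {m n : ℕ} (h : m ≤ n), Function.Surjective (t h))
    (inj : ∀ k l, Function.Injective (μ k l))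
    (ker : ∀ k l (x : Λ (k + l)), t (Nat.le_add_right k l) x = 0 ↔ ∃ z, μ k l z = x)
    (comp₁ : ∀ k l (x : Λ (k + l)), μ k l (t (Nat.le_add_left l k) x) = p ^ k • x)
    (comp₂ : ∀ k l (z : Λ l), t (Nat.le_add_left l k) (μ k l z) = p ^ k • z)
    {f : ∀ n, Λ n} (hf : IsCompatibleFamily (fun h ↦ t h) f) (k : ℕ) :
    f k = 0 ↔ ∃ g, IsCompatibleFamily (fun h ↦ t h) g ∧ ∀ m, f m = p ^ k • g m := by
  dsimp only [IsCompatibleFamily] at hf ⊢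
  constructor
  · intro hfk
    have hlift : ∀ m, ∃ z, μ k m z = f (k + m) := fun m ↦
      (ker k m _).mp (by rw [hf k (k + m), hfk])
    choose g hg using hlift
    refine ⟨g, fun m n h ↦ inj k m ?_, fun m ↦ ?_⟩
    · rw [map_transition_comm t μ trans surj comp₁, hg, hg, hf]
    · rw [← hf m (k + m) (Nat.le_add_left m k), ← hg, comp₂]
  · rintro ⟨g, -, hfg⟩
    rw [hfg k, pow_smul_eq_zero t μ refl ker comp₁]

theorem IsCompatibleFamily.eq_zero_of_smul_eq_zero
    (inj : ∀ k l, Function.Injective (μ k l))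
    (comp₁ : ∀ k l (x : Λ (k + l)), μ k l (t (Nat.le_add_left l k) x) = p ^ k • x)
    {f : ∀ n, Λ n} (hf : IsCompatibleFamily (fun h ↦ t h) f) (hpf : ∀ m, p • f m = 0) (m : ℕ) :
    f m = 0 :=
  inj 1 m <| by rw [map_zero, ← hf m (1 + m) (Nat.le_add_left m 1), comp₁, pow_one, hpf]

end PPowerSystem

theorem limit_of_p_power_system_mod_p_and_torsionfree_general
    (p : ℕ)
    (Λk : ℕ → Type*) [∀ m, AddCommGroup (Λk m)]
    (t : ∀ {m n : ℕ}, m ≤ n → (Λk n →+ Λk m))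
    (ht_refl : ∀ (m : ℕ) (x : Λk m), t (le_refl m) x = x)
    (ht_trans : ∀ {a b c : ℕ} (h1 : a ≤ b) (h2 : b ≤ c) (x : Λk c),
      t h1 (t h2 x) = t (h1.trans h2) x)
    (ht_surj : ∀ {m n : ℕ} (h : m ≤ n), Function.Surjective (t h))
    (μ : ∀ k l : ℕ, Λk l →+ Λk (k + l))
    (hμ_inj : ∀ k l, Function.Injective (μ k l))
    (hker : ∀ (k l : ℕ) (x : Λk (k + l)),
      t (Nat.le_add_right k l) x = 0 ↔ ∃ z : Λk l, μ k l z = x)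
    (hcomp₁ : ∀ (k l : ℕ) (x : Λk (k + l)),
      μ k l (t (Nat.le_add_left l k) x) = p ^ k • x)
    (hcomp₂ : ∀ (k l : ℕ) (z : Λk l),
      t (Nat.le_add_left l k) (μ k l z) = p ^ k • z) :
    (∀ k : ℕ,
      -- surjectivity of Λ = lim Λ_m → Λ_k
      (∀ y : Λk k, ∃ f : ∀ m, Λk m,
        (∀ (m n : ℕ) (h : m ≤ n), t h (f n) = f m) ∧ f k = y) ∧
      -- the kernel of Λ → Λ_k is pᵏ·Λ, i.e. Λ/pᵏΛ ≅ Λ_k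
      (∀ f : ∀ m, Λk m, (∀ (m n : ℕ) (h : m ≤ n), t h (f n) = f m) →
        (f k = 0 ↔ ∃ g : ∀ m, Λk m,
          (∀ (m n : ℕ) (h : m ≤ n), t h (g n) = g m) ∧ ∀ m, f m = p ^ k • g m))) ∧
    -- Λ is p-torsion-free
    (∀ f : ∀ m, Λk m, (∀ (m n : ℕ) (h : m ≤ n), t h (f n) = f m) →
      (∀ m, p • f m = 0) → ∀ m, f m = 0) :=
  ⟨fun _ ↦ ⟨exists_isCompatibleFamily_eq_of_surjective (fun h ↦ t h) ht_refl ht_trans ht_surj,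
      fun _ hf ↦ IsCompatibleFamily.eq_zero_iff_exists_pow_smul t μ ht_refl ht_trans ht_surj hμ_inj hker hcomp₁
        hcomp₂ hf _⟩,
    fun _ hf hpf ↦ IsCompatibleFamily.eq_zero_of_smul_eq_zero t μ hμ_inj hcomp₁ hf hpf⟩

theorem limit_of_p_power_system_mod_p_and_torsionfree
    (p : ℕ) (hp : p.Prime)
    (Λk : ℕ → Type*) [∀ m, AddCommGroup (Λk m)]
    (t : ∀ {m n : ℕ}, m ≤ n → (Λk n →+ Λk m))
    (ht_refl : ∀ (m : ℕ) (x : Λk m), t (le_refl m) x = x)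
    (ht_trans : ∀ {a b c : ℕ} (h1 : a ≤ b) (h2 : b ≤ c) (x : Λk c),
      t h1 (t h2 x) = t (h1.trans h2) x)
    (ht_surj : ∀ {m n : ℕ} (h : m ≤ n), Function.Surjective (t h))
    (μ : ∀ k l : ℕ, Λk l →+ Λk (k + l))
    (hμ_inj : ∀ k l, Function.Injective (μ k l))
    (hker : ∀ (k l : ℕ) (x : Λk (k + l)),
      t (Nat.le_add_right k l) x = 0 ↔ ∃ z : Λk l, μ k l z = x)
    (hcomp₁ : ∀ (k l : ℕ) (x : Λk (k + l)),
      μ k l (t (Nat.le_add_left l k) x) = p ^ k • x)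
    (hcomp₂ : ∀ (k l : ℕ) (z : Λk l),
      t (Nat.le_add_left l k) (μ k l z) = p ^ k • z) :
    (∀ k : ℕ,
      -- surjectivity of Λ = lim Λ_m → Λ_k
      (∀ y : Λk k, ∃ f : ∀ m, Λk m,
        (∀ (m n : ℕ) (h : m ≤ n), t h (f n) = f m) ∧ f k = y) ∧
      -- the kernel of Λ → Λ_k is pᵏ·Λ, i.e. Λ/pᵏΛ ≅ Λ_k
      (∀ f : ∀ m, Λk m, (∀ (m n : ℕ) (h : m ≤ n), t h (f n) = f m) →
        (f k = 0 ↔ ∃ g : ∀ m, Λk m,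
          (∀ (m n : ℕ) (h : m ≤ n), t h (g n) = g m) ∧ ∀ m, f m = p ^ k • g m))) ∧
    -- Λ is p-torsion-free
    (∀ f : ∀ m, Λk m, (∀ (m n : ℕ) (h : m ≤ n), t h (f n) = f m) →
      (∀ m, p • f m = 0) → ∀ m, f m = 0) :=
  limit_of_p_power_system_mod_p_and_torsionfree_general p Λk t ht_refl ht_trans ht_surj μ hμ_inj
    hker hcomp₁ hcomp₂
end
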